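/- arXiv:1901.06598 — 3 statements merged into one kernel-verified Lean document; each statement's English description precedes it below -/
import Mathlib

section
/- Let (Ω, μ) be a probability space with a measure-preserving ℤ^d-action (τ_ξ)_{ξ∈ℤ^d}, let p ∈ ℤ_{>0}^d, and let h : ℤ^d → ℂ satisfy h(0) = 0, ∑_ξ |h(ξ)| < ∞, and suppose supp h = {ξ : h(ξ) ≠ 0} generates ℤ^d as a group. Then for every x ∈ ℤ^d and every w ∈ ℂ^{Z_p} one has the identity ‖K̂_0(δ_x ⊗ w ⊗ 𝟙)‖² = ∑_{ξ ≠ 0} |h(ξ)|² · ‖(I − T_{−ξ})w‖²_{ℂ^{Z_p}}, and K̂_0(δ_x ⊗ w ⊗ 𝟙) = 0 if and only if w is a scalar multiple of the all-ones vector 𝟙⃗ ∈ ℂ^{Z_p}. -/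
open MeasureTheory
open scoped BigOperators

/-- The translation operator `T_m` on `ℂ^{Z_p}`, `Z_p = ∏_j ℤ/p_jℤ`:
`(T_m f)(σ) = f(σ + m̄)`. -/
noncomputable def Tm {d : ℕ} (p : Fin d → ℕ) (m : Fin d → ℤ) :
    Module.End ℂ ((∀ j, ZMod (p j)) → ℂ) where
  toFun f := fun σ => f fun j => σ j + (m j : ZMod (p j))
  map_add' _ _ := rfl
  map_smul' _ _ := rfl

/-- The Floquet-transformed hopping operator at quasimomentum `k = 0`. -/
noncomputable def Khat0 {d : ℕ} {Ω : Type*} (p : Fin d → ℕ) (τ : (Fin d → ℤ) → Ω → Ω)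
    (h : (Fin d → ℤ) → ℂ)
    (φ : (∀ j, ZMod (p j)) → (Fin d → ℤ) → Ω → ℂ) :
    (∀ j, ZMod (p j)) → (Fin d → ℤ) → Ω → ℂ :=
  fun σ x ω => ∑' ξ : {ξ : Fin d → ℤ // ξ ≠ 0},
    h ξ.1 * (φ σ (x - ξ.1) ω -
      φ (fun j => σ j - (ξ.1 j : ZMod (p j))) (x - ξ.1) (τ ξ.1 ω))

/-- The squared norm of `L²(ℤ^d × Ω; ℂ^{Z_p})`:
`‖φ‖² = ∑_σ ∑_x ∫ |φ_σ(x,ω)|² dμ`. -/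
noncomputable def l2normSq {d : ℕ} {Ω : Type*} [MeasurableSpace Ω] (μ : Measure Ω)
    (p : Fin d → ℕ) [∀ j, NeZero (p j)]
    (φ : (∀ j, ZMod (p j)) → (Fin d → ℤ) → Ω → ℂ) : ℝ :=
  ∑ σ : ∀ j, ZMod (p j), ∑' x : Fin d → ℤ, ∫ ω, ‖φ σ x ω‖ ^ 2 ∂μ

/-- Pointwise evaluation of `Khat0` on the rank-one tensor `δ_x ⊗ w ⊗ 𝟙`. -/
lemma khat_apply {d : ℕ} {Ω : Type*} (p : Fin d → ℕ) (τ : (Fin d → ℤ) → Ω → Ω)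
    (h : (Fin d → ℤ) → ℂ) (h0 : h 0 = 0) (x : Fin d → ℤ) (w : (∀ j, ZMod (p j)) → ℂ)
    (σ : ∀ j, ZMod (p j)) (y : Fin d → ℤ) (ω : Ω) :
    Khat0 p τ h (fun σ y _ => (if y = x then 1 else 0) * w σ) σ y ω
      = h (y - x) * (w σ - w (fun j => σ j - ((y - x) j : ZMod (p j)))) := by
  unfold Khat0
  by_cases hy : y = x
  · subst hy
    have : ∀ ξ : {ξ : Fin d → ℤ // ξ ≠ 0},
        h ξ.1 * ((if y - ξ.1 = y then (1:ℂ) else 0) * w σ -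
          (if y - ξ.1 = y then (1:ℂ) else 0) * w (fun j => σ j - (ξ.1 j : ZMod (p j)))) = 0 := by
      intro ξ
      have hne : y - ξ.1 ≠ y := by
        intro hc
        exact ξ.2 (by have := sub_eq_iff_eq_add.mp hc; simpa using this.symm)
      simp [hne]
    rw [tsum_congr this, tsum_zero]
    simp [h0]
  · have hξ0 : y - x ≠ 0 := sub_ne_zero.mpr hy
    have hcond : ∀ ξ : Fin d → ℤ, (y - ξ = x) ↔ (ξ = y - x) := by
      intro ξ
      constructor
      · intro hh; rw [← hh, sub_sub_cancel]
      · intro hh; rw [hh, sub_sub_cancel]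
    have : ∀ ξ : {ξ : Fin d → ℤ // ξ ≠ 0},
        h ξ.1 * ((if y - ξ.1 = x then (1:ℂ) else 0) * w σ -
          (if y - ξ.1 = x then (1:ℂ) else 0) * w (fun j => σ j - (ξ.1 j : ZMod (p j))))
        = if ξ = (⟨y - x, hξ0⟩ : {ξ : Fin d → ℤ // ξ ≠ 0}) then
            h (y - x) * (w σ - w (fun j => σ j - ((y - x) j : ZMod (p j)))) else 0 := by
      intro ξ
      by_cases hc : ξ.1 = y - x
      · have hsub : ξ = (⟨y - x, hξ0⟩ : {ξ : Fin d → ℤ // ξ ≠ 0}) := Subtype.ext hc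
        simp [hsub, (hcond (y - x)).mpr rfl]
      · have hsub : ξ ≠ (⟨y - x, hξ0⟩ : {ξ : Fin d → ℤ // ξ ≠ 0}) := by
          intro hc'; exact hc (by rw [hc'])
        have : ¬ (y - ξ.1 = x) := fun hh => hc ((hcond ξ.1).mp hh)
        simp [hsub, this]
    rw [tsum_congr this, tsum_ite_eq]

section aux
variable {d : ℕ} (p : Fin d → ℕ)

lemma summable_aux (h : (Fin d → ℤ) → ℂ)
    (hsum : Summable fun ξ => ‖h ξ‖) (c : (Fin d → ℤ) → ℝ)
    (hc0 : ∀ ξ, 0 ≤ c ξ) {B : ℝ} (hcB : ∀ ξ, c ξ ≤ B) :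
    Summable (fun ξ : {ξ : Fin d → ℤ // ξ ≠ 0} => ‖h ξ.1‖ ^ 2 * c ξ.1) := by
  set S : ℝ := ∑' ξ, ‖h ξ‖ with hS
  have hle : ∀ ξ : Fin d → ℤ, ‖h ξ‖ ≤ S := by
    intro ξ
    exact hsum.le_tsum ξ fun j _ => norm_nonneg _
  have hsub : Summable ((fun ξ => (S * B) * ‖h ξ‖) ∘
      (Subtype.val : {ξ : Fin d → ℤ // ξ ≠ 0} → _)) :=
    ((hsum.mul_left (S * B)).subtype _)
  refine Summable.of_nonneg_of_le (fun ξ => ?_) (fun ξ => ?_) hsub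
  · exact mul_nonneg (sq_nonneg _) (hc0 _)
  · have h1 : (0:ℝ) ≤ ‖h ξ.1‖ := norm_nonneg _
    have hB : (0:ℝ) ≤ B := le_trans (hc0 0) (hcB 0)
    calc ‖h ξ.1‖ ^ 2 * c ξ.1
        ≤ ‖h ξ.1‖ ^ 2 * B := by
          exact mul_le_mul_of_nonneg_left (hcB _) (sq_nonneg _)
      _ = (‖h ξ.1‖ * B) * ‖h ξ.1‖ := by ring
      _ ≤ (S * B) * ‖h ξ.1‖ := by
          exact mul_le_mul_of_nonneg_right (mul_le_mul_of_nonneg_right (hle _) hB) h1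

/-- Identify the difference in `Khat0` with `(1 - Tm p (-ξ)) w`. -/
lemma diff_eq_tm (w : (∀ j, ZMod (p j)) → ℂ) [∀ j, NeZero (p j)]
    (ξ : Fin d → ℤ) (σ : ∀ j, ZMod (p j)) :
    w σ - w (fun j => σ j - (ξ j : ZMod (p j))) = (1 - Tm p (-ξ)) w σ := by
  have : (fun j => σ j - (ξ j : ZMod (p j))) = (fun j => σ j + ((-ξ) j : ZMod (p j))) := by
    funext j
    simp [sub_eq_add_neg]
  rw [this]
  rfl

end aux

/-- for non-degenerate hopping,
`‖K̂_0(δ_x⊗w⊗𝟙)‖² = ∑_{ξ≠0} |h(ξ)|²·‖(I−T_{−ξ})w‖²`, and `K̂_0(δ_x⊗w⊗𝟙) = 0`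
iff `w` is a multiple of the all-ones vector. -/
theorem stmt_7 {d : ℕ} {Ω : Type*} [MeasurableSpace Ω] (μ : Measure Ω)
    [IsProbabilityMeasure μ]
    (τ : (Fin d → ℤ) → Ω → Ω) (hmp : ∀ ξ, MeasurePreserving (τ ξ) μ μ)
    (hτ0 : τ 0 = id) (hτadd : ∀ ξ η, τ (ξ + η) = τ ξ ∘ τ η)
    (p : Fin d → ℕ) [∀ j, NeZero (p j)]
    (h : (Fin d → ℤ) → ℂ) (h0 : h 0 = 0)
    (hsum : Summable fun ξ => ‖h ξ‖)
    (hgen : AddSubgroup.closure {ξ : Fin d → ℤ | h ξ ≠ 0} = ⊤)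
    (x : Fin d → ℤ) (w : (∀ j, ZMod (p j)) → ℂ) :
    l2normSq μ p (Khat0 p τ h (fun σ y _ => (if y = x then 1 else 0) * w σ)) =
        (∑' ξ : {ξ : Fin d → ℤ // ξ ≠ 0},
          ‖h ξ.1‖ ^ 2 *
            ∑ σ : ∀ j, ZMod (p j), ‖(1 - Tm p (-ξ.1)) w σ‖ ^ 2) ∧
      (Khat0 p τ h (fun σ y _ => (if y = x then 1 else 0) * w σ) = 0 ↔
        ∃ c : ℂ, w = fun _ => c) := by
  -- the "difference" function
  set D : (Fin d → ℤ) → (∀ j, ZMod (p j)) → ℂ :=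
    fun ξ σ => w σ - w (fun j => σ j - (ξ j : ZMod (p j))) with hD
  -- a uniform bound on |D ξ σ|²
  set B : ℝ := (2 * ∑ a : ∀ j, ZMod (p j), ‖w a‖) ^ 2 with hB
  have hwle : ∀ a : ∀ j, ZMod (p j), ‖w a‖ ≤
      ∑ a : ∀ j, ZMod (p j), ‖w a‖ := by
    intro a
    exact Finset.single_le_sum (f := fun a => ‖w a‖)
      (fun i _ => norm_nonneg _) (Finset.mem_univ a)
  have hDle : ∀ ξ σ, ‖D ξ σ‖ ^ 2 ≤ B := by
    intro ξ σ
    have h1 : ‖D ξ σ‖ ≤ 2 * ∑ a : ∀ j, ZMod (p j), ‖w a‖ := by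
      calc ‖D ξ σ‖ ≤ ‖w σ‖ +
            ‖w (fun j => σ j - (ξ j : ZMod (p j)))‖ := by
              exact norm_sub_le _ _
        _ ≤ 2 * ∑ a : ∀ j, ZMod (p j), ‖w a‖ := by
            have := hwle σ
            have := hwle (fun j => σ j - (ξ j : ZMod (p j)))
            nlinarith [hwle σ, hwle (fun j => σ j - (ξ j : ZMod (p j)))]
    rw [hB]
    exact pow_le_pow_left₀ (norm_nonneg _) h1 2
  have hsummable : ∀ σ, Summable (fun ξ : {ξ : Fin d → ℤ // ξ ≠ 0} =>
      ‖h ξ.1‖ ^ 2 * ‖D ξ.1 σ‖ ^ 2) := by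
    intro σ
    exact summable_aux h hsum (fun ξ => ‖D ξ σ‖ ^ 2)
      (fun ξ => sq_nonneg _) (fun ξ => hDle ξ σ)
  have hKapp : ∀ σ y ω, Khat0 p τ h (fun σ y _ => (if y = x then 1 else 0) * w σ) σ y ω
      = h (y - x) * D (y - x) σ := fun σ y ω => khat_apply p τ h h0 x w σ y ω
  constructor
  · -- norm identity
    unfold l2normSq
    have step1 : ∀ σ : ∀ j, ZMod (p j),
        (∑' y : Fin d → ℤ, ∫ ω, ‖
            Khat0 p τ h (fun σ y _ => (if y = x then 1 else 0) * w σ) σ y ω‖ ^ 2 ∂μ)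
        = ∑' ξ : {ξ : Fin d → ℤ // ξ ≠ 0},
            ‖h ξ.1‖ ^ 2 * ‖D ξ.1 σ‖ ^ 2 := by
      intro σ
      have e1 : ∀ y : Fin d → ℤ,
          (∫ ω, ‖
            Khat0 p τ h (fun σ y _ => (if y = x then 1 else 0) * w σ) σ y ω‖ ^ 2 ∂μ)
          = ‖h (y - x)‖ ^ 2 * ‖D (y - x) σ‖ ^ 2 := by
        intro y
        have : (fun ω => ‖
            Khat0 p τ h (fun σ y _ => (if y = x then 1 else 0) * w σ) σ y ω‖ ^ 2)
            = fun _ => ‖h (y - x)‖ ^ 2 * ‖D (y - x) σ‖ ^ 2 := by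
          funext ω
          rw [hKapp σ y ω, norm_mul, mul_pow]
        rw [this, integral_const]
        simp
      rw [tsum_congr e1]
      -- reindex y ↦ y - x, then restrict to ξ ≠ 0
      have e2 : (∑' y : Fin d → ℤ,
          ‖h (y - x)‖ ^ 2 * ‖D (y - x) σ‖ ^ 2)
          = ∑' ξ : Fin d → ℤ, ‖h ξ‖ ^ 2 * ‖D ξ σ‖ ^ 2 :=
        Equiv.tsum_eq (Equiv.subRight x)
          (fun ξ => ‖h ξ‖ ^ 2 * ‖D ξ σ‖ ^ 2)
      rw [e2]
      refine (tsum_subtype_eq_of_support_subset (s := {ξ : Fin d → ℤ | ξ ≠ 0}) ?_).symm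
      intro ξ hξ
      simp only [Function.mem_support] at hξ
      intro hc
      apply hξ
      subst hc
      simp [h0]
    rw [Finset.sum_congr rfl (fun σ _ => step1 σ)]
    have swap : (∑ σ : ∀ j, ZMod (p j), ∑' ξ : {ξ : Fin d → ℤ // ξ ≠ 0},
        ‖h ξ.1‖ ^ 2 * ‖D ξ.1 σ‖ ^ 2)
        = ∑' ξ : {ξ : Fin d → ℤ // ξ ≠ 0}, ∑ σ : ∀ j, ZMod (p j),
            ‖h ξ.1‖ ^ 2 * ‖D ξ.1 σ‖ ^ 2 :=
      (Summable.tsum_finsetSum (fun σ _ => hsummable σ)).symm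
    rw [swap]
    refine tsum_congr fun ξ => ?_
    rw [Finset.mul_sum]
    refine Finset.sum_congr rfl fun σ _ => ?_
    simp only [hD]
    rw [diff_eq_tm p w ξ.1 σ]
  · constructor
    · intro hz
      -- Ω is nonempty since μ is a probability measure
      have hΩ : Nonempty Ω := by
        by_contra hc
        have h1 : (Set.univ : Set Ω) = ∅ := Set.univ_eq_empty_iff.mpr (not_nonempty_iff.mp hc)
        have := measure_univ (μ := μ)
        rw [h1, measure_empty] at this
        exact zero_ne_one this
      obtain ⟨ω⟩ := hΩ
      have key : ∀ ξ : Fin d → ℤ, h ξ ≠ 0 → ∀ σ, w (fun j => σ j - (ξ j : ZMod (p j))) = w σ := by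
        intro ξ hξ σ
        have := hKapp σ (x + ξ) ω
        rw [hz] at this
        simp only [Pi.zero_apply, add_sub_cancel_left] at this
        have h2 : D ξ σ = 0 := by
          rcases mul_eq_zero.mp this.symm with hc | hc
          · exact absurd hc hξ
          · exact hc
        have := sub_eq_zero.mp h2
        exact this.symm
      -- the invariance subgroup
      let A : AddSubgroup (∀ j, ZMod (p j)) :=
        { carrier := {m | ∀ σ, w (σ - m) = w σ}
          zero_mem' := by intro σ; simp
          add_mem' := by
            intro a b ha hb σ
            have h1 : σ - (a + b) = (σ - b) - a := by abel
            rw [h1, ha (σ - b), hb σ]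
          neg_mem' := by
            intro a ha σ
            have h1 := ha (σ + a)
            rw [add_sub_cancel_right] at h1
            rw [sub_neg_eq_add, ← h1] }
      -- the reduction hom
      let π : (Fin d → ℤ) →+ (∀ j, ZMod (p j)) :=
        { toFun := fun ξ j => (ξ j : ZMod (p j))
          map_zero' := by funext j; simp
          map_add' := by intro a b; funext j; push_cast; simp }
      have hπsurj : Function.Surjective π := by
        intro σ
        refine ⟨fun j => ((ZMod.intCast_surjective (σ j)).choose), ?_⟩
        funext j
        exact (ZMod.intCast_surjective (σ j)).choose_spec
      have himg : π '' {ξ : Fin d → ℤ | h ξ ≠ 0} ⊆ (A : Set (∀ j, ZMod (p j))) := by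
        rintro m ⟨ξ, hξ, rfl⟩ σ
        have := key ξ hξ σ
        convert this using 2
        rfl
      have hA : A = ⊤ := by
        have h1 : AddSubgroup.closure (π '' {ξ : Fin d → ℤ | h ξ ≠ 0}) = ⊤ := by
          rw [← AddMonoidHom.map_closure, hgen, AddSubgroup.map_top_of_surjective π hπsurj]
        exact top_unique (h1 ▸ ((AddSubgroup.closure_le _).mpr himg))
      refine ⟨w 0, ?_⟩
      funext σ
      have hmem : σ ∈ A := hA ▸ AddSubgroup.mem_top σ
      have := hmem σ
      rw [sub_self] at this
      exact this.symm
    · intro ⟨c, hc⟩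
      subst hc
      funext σ y ω
      rw [hKapp σ y ω]
      simp [hD]
end

section
/- Let (Ω, μ) be a probability space with a measure-preserving ℤ^d-action (τ_ξ)_{ξ∈ℤ^d}, let p ∈ ℤ_{>0}^d with p_j ≥ 2 for some j, and let h : ℤ^d → ℂ satisfy h(0) = 0, ∑_ξ |h(ξ)| < ∞, and suppose supp h generates ℤ^d as a group. Define c_0 := min over nonzero ℓ = (ℓ_1,…,ℓ_d) ∈ Z_p of ∑_{ξ ≠ 0} |h(ξ)|² · |1 − exp(−2πi ∑_{j=1}^d ℓ_j ξ_j / p_j)|². Then c_0 > 0, and for every x ∈ ℤ^d and every w ∈ ℂ^{Z_p} orthogonal to the all-ones vector 𝟙⃗ one has ‖K̂_0(δ_x ⊗ w ⊗ 𝟙)‖² ≥ c_0 · ‖w‖²_{ℂ^{Z_p}}. -/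
open MeasureTheory
open scoped BigOperators ComplexConjugate

/-- The constant `c₀ = min_{0 ≠ ℓ ∈ Z_p} ∑_{ξ≠0} |h(ξ)|²·|1 − e^{−2πi ∑_j ℓ_jξ_j/p_j}|²`. -/
noncomputable def cZero {d : ℕ} (p : Fin d → ℕ) [∀ j, NeZero (p j)]
    (h : (Fin d → ℤ) → ℂ) : ℝ :=
  ⨅ ℓ : {ℓ : ∀ j, ZMod (p j) // ℓ ≠ 0},
    ∑' ξ : {ξ : Fin d → ℤ // ξ ≠ 0},
      ‖h ξ.1‖ ^ 2 *
        ‖1 - Complex.exp (-(2 * (Real.pi : ℂ) * Complex.I) *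
          ∑ j, ((ℓ.1 j).val : ℂ) * (ξ.1 j : ℂ) / (p j : ℂ))‖ ^ 2

section Aux

variable {d : ℕ} (p : Fin d → ℕ) [∀ j, NeZero (p j)]

/-- The character of `∏ ZMod (p j)` indexed by `ℓ`. -/
noncomputable def chiC (ℓ : ∀ j, ZMod (p j)) : AddChar (∀ j, ZMod (p j)) ℂ where
  toFun := fun σ => ∏ j, ZMod.stdAddChar (ℓ j * σ j)
  map_zero_eq_one' := by simp
  map_add_eq_mul' := by
    intro a b
    simp only [Pi.add_apply, mul_add, AddChar.map_add_eq_mul, Finset.prod_mul_distrib]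

lemma chiC_apply (ℓ σ : ∀ j, ZMod (p j)) :
    chiC p ℓ σ = ∏ j, ZMod.stdAddChar (ℓ j * σ j) := rfl

lemma chiC_comm (ℓ σ : ∀ j, ZMod (p j)) : chiC p ℓ σ = chiC p σ ℓ := by
  simp only [chiC_apply, mul_comm]

lemma chiC_single {j : Fin d} (ℓ : ∀ j, ZMod (p j)) :
    chiC p ℓ (Pi.single j 1) = ZMod.stdAddChar (ℓ j) := by
  rw [chiC_apply, Finset.prod_eq_single j]
  · simp
  · intro i _ hij; simp [Pi.single_eq_of_ne hij]
  · simp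

lemma chiC_abs (ℓ σ : ∀ j, ZMod (p j)) : ‖chiC p ℓ σ‖ = 1 := by
  have : ‖chiC p ℓ σ‖ = 1 := by
    rw [chiC_apply, norm_prod]
    apply Finset.prod_eq_one
    intro j _
    simp [ZMod.stdAddChar_apply, Circle.norm_coe]
  exact this

lemma chiC_conj (ℓ σ : ∀ j, ZMod (p j)) :
    conj (chiC p ℓ σ) = chiC p ℓ (-σ) := by
  rw [AddChar.map_neg_eq_inv, ← Complex.inv_eq_conj]
  rw [chiC_apply, norm_prod]
  apply Finset.prod_eq_one
  intro j _
  simp [ZMod.stdAddChar_apply, Circle.norm_coe]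

lemma chiC_ne_zero {ℓ : ∀ j, ZMod (p j)} (hℓ : ℓ ≠ 0) : chiC p ℓ ≠ 0 := by
  intro hcontra
  obtain ⟨j, hj⟩ := Function.ne_iff.mp hℓ
  apply hj
  have h1 : chiC p ℓ (Pi.single j 1) = 1 := by rw [hcontra]; rfl
  rw [chiC_single] at h1
  have := ZMod.injective_stdAddChar (N := p j) (a₁ := ℓ j) (a₂ := 0) (by simpa using h1)
  simpa using this

lemma chiC_sum_eq (ℓ : ∀ j, ZMod (p j)) :
    ∑ σ : ∀ j, ZMod (p j), chiC p ℓ σ =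
      if ℓ = 0 then (Fintype.card (∀ j, ZMod (p j)) : ℂ) else 0 := by
  split_ifs with hl
  · subst hl; simp [chiC_apply, Finset.card_univ]
  · exact (AddChar.sum_eq_zero_iff_ne_zero).mpr (chiC_ne_zero p hl)

lemma chiC_sum_eq' (σ : ∀ j, ZMod (p j)) :
    ∑ ℓ : ∀ j, ZMod (p j), chiC p ℓ σ =
      if σ = 0 then (Fintype.card (∀ j, ZMod (p j)) : ℂ) else 0 := by
  simp_rw [chiC_comm]; exact chiC_sum_eq p σ

/-- discrete Fourier transform on the product group. -/
noncomputable def dftC (w : (∀ j, ZMod (p j)) → ℂ) (ℓ : ∀ j, ZMod (p j)) : ℂ :=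
  ∑ σ, w σ * conj (chiC p ℓ σ)

lemma parsevalC (w : (∀ j, ZMod (p j)) → ℂ) :
    ∑ ℓ, dftC p w ℓ * conj (dftC p w ℓ) =
      (Fintype.card (∀ j, ZMod (p j)) : ℂ) * ∑ σ, w σ * conj (w σ) := by
  have step1 : ∀ ℓ, dftC p w ℓ * conj (dftC p w ℓ) =
      ∑ σ, ∑ σ', (w σ * conj (w σ')) * (chiC p ℓ (σ' - σ)) := by
    intro ℓ
    rw [dftC, map_sum, Finset.sum_mul_sum]
    refine Finset.sum_congr rfl fun σ _ => Finset.sum_congr rfl fun σ' _ => ?_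
    rw [map_mul, Complex.conj_conj, chiC_conj, sub_eq_add_neg, AddChar.map_add_eq_mul]
    ring
  simp_rw [step1]
  rw [Finset.sum_comm]
  have step2 : ∀ σ, ∑ ℓ, ∑ σ', (w σ * conj (w σ')) * (chiC p ℓ (σ' - σ)) =
      (Fintype.card (∀ j, ZMod (p j)) : ℂ) * (w σ * conj (w σ)) := by
    intro σ
    rw [Finset.sum_comm]
    have : ∀ σ', ∑ ℓ, (w σ * conj (w σ')) * (chiC p ℓ (σ' - σ)) =
        (w σ * conj (w σ')) * (if σ' - σ = 0 then (Fintype.card (∀ j, ZMod (p j)) : ℂ) else 0) := by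
      intro σ'
      rw [← Finset.mul_sum, chiC_sum_eq']
    simp_rw [this, sub_eq_zero, mul_ite, mul_zero]
    rw [Finset.sum_ite_eq' Finset.univ σ (fun σ' => (w σ * conj (w σ')) * _)]
    simp [mul_comm]
  simp_rw [step2]
  rw [← Finset.mul_sum]

lemma dftC_shift (w : (∀ j, ZMod (p j)) → ℂ) (m ℓ : ∀ j, ZMod (p j)) :
    dftC p (fun σ => w (σ - m)) ℓ = chiC p ℓ (-m) * dftC p w ℓ := by
  unfold dftC
  rw [Finset.mul_sum]
  refine Fintype.sum_equiv (Equiv.subRight m) _ _ fun σ => ?_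
  simp only [Equiv.subRight_apply]
  have h1 : (chiC p ℓ) (-m) * (chiC p ℓ) m = 1 := by
    rw [← AddChar.map_add_eq_mul, neg_add_cancel, AddChar.map_zero_eq_one]
  have h2 : conj ((chiC p ℓ) (σ - m)) = conj ((chiC p ℓ) σ) * (chiC p ℓ) m := by
    rw [sub_eq_add_neg, AddChar.map_add_eq_mul, map_mul, chiC_conj p ℓ (-m), neg_neg]
  rw [h2]
  linear_combination (-(w (σ - m) * (starRingEnd ℂ) ((chiC p ℓ) σ))) * h1

lemma dftC_sub (w : (∀ j, ZMod (p j)) → ℂ) (m ℓ : ∀ j, ZMod (p j)) :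
    dftC p (fun σ => w σ - w (σ - m)) ℓ = (1 - chiC p ℓ (-m)) * dftC p w ℓ := by
  have : dftC p (fun σ => w σ - w (σ - m)) ℓ
      = dftC p w ℓ - dftC p (fun σ => w (σ - m)) ℓ := by
    unfold dftC
    rw [← Finset.sum_sub_distrib]
    exact Finset.sum_congr rfl fun σ _ => by ring
  rw [this, dftC_shift, sub_mul, one_mul]

lemma parseval_real (w : (∀ j, ZMod (p j)) → ℂ) :
    ∑ ℓ, ‖dftC p w ℓ‖ ^ 2 =
      (Fintype.card (∀ j, ZMod (p j)) : ℝ) * ∑ σ, ‖w σ‖ ^ 2 := by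
  have := parsevalC p w
  apply Complex.ofReal_injective
  simp_rw [Complex.sq_norm]
  push_cast
  simp_rw [← Complex.mul_conj]
  exact this

lemma key_identity (w : (∀ j, ZMod (p j)) → ℂ) (m : ∀ j, ZMod (p j)) :
    (Fintype.card (∀ j, ZMod (p j)) : ℝ) *
        ∑ σ, ‖w σ - w (σ - m)‖ ^ 2 =
      ∑ ℓ, ‖dftC p w ℓ‖ ^ 2 * ‖1 - chiC p ℓ (-m)‖ ^ 2 := by
  have hP := parsevalC p (fun σ => w σ - w (σ - m))
  simp_rw [dftC_sub] at hP
  apply Complex.ofReal_injective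
  simp_rw [Complex.sq_norm]
  push_cast
  simp_rw [← Complex.mul_conj]
  rw [← hP]
  exact Finset.sum_congr rfl fun ℓ _ => by rw [map_mul]; ring

lemma expFactor (ℓ : ∀ j, ZMod (p j)) (ξ : Fin d → ℤ) :
    Complex.exp (-(2 * (Real.pi : ℂ) * Complex.I) *
        ∑ j, ((ℓ j).val : ℂ) * (ξ j : ℂ) / (p j : ℂ))
      = chiC p ℓ (fun j => -((ξ j : ZMod (p j)))) := by
  rw [chiC_apply, Finset.mul_sum, Complex.exp_sum]
  refine Finset.prod_congr rfl fun j _ => ?_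
  have : ℓ j * (-((ξ j : ZMod (p j)))) = (((-((ℓ j).val : ℤ) * ξ j : ℤ)) : ZMod (p j)) := by
    push_cast [ZMod.natCast_val, ZMod.cast_id]
    ring
  rw [this, ZMod.stdAddChar_coe]
  congr 1
  push_cast
  ring

lemma Khat_eval {Ω : Type*} (τ : (Fin d → ℤ) → Ω → Ω) (h : (Fin d → ℤ) → ℂ) (h0 : h 0 = 0)
    (x : Fin d → ℤ) (w : (∀ j, ZMod (p j)) → ℂ)
    (σ : ∀ j, ZMod (p j)) (y : Fin d → ℤ) (ω : Ω) :
    Khat0 p τ h (fun σ y _ => (if y = x then 1 else 0) * w σ) σ y ω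
      = h (y - x) * (w σ - w (fun j => σ j - ((y - x) j : ZMod (p j)))) := by
  unfold Khat0
  by_cases hyx : y = x
  · subst hyx
    have hz : ∀ ξ : {ξ : Fin d → ℤ // ξ ≠ 0},
        h ξ.1 * ((if y - ξ.1 = y then 1 else 0) * w σ -
          (if y - ξ.1 = y then 1 else 0) * w (fun j => σ j - (ξ.1 j : ZMod (p j)))) = 0 := by
      intro ξ
      rw [if_neg (by simpa [sub_eq_self] using ξ.2)]
      ring
    rw [tsum_congr hz, tsum_zero, sub_self, h0, zero_mul]
  · rw [tsum_eq_single (⟨y - x, sub_ne_zero_of_ne hyx⟩ : {ξ : Fin d → ℤ // ξ ≠ 0}) ?_]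
    · show h (y - x) * ((if y - (y - x) = x then (1:ℂ) else 0) * w σ -
          (if y - (y - x) = x then (1:ℂ) else 0) *
            w (fun j => σ j - ((y - x) j : ZMod (p j)))) = _
      rw [if_pos (by rw [sub_sub_cancel])]
      ring
    · intro b hb
      have hb1 : b.1 ≠ y - x := fun hc => hb (Subtype.ext hc)
      have hne : y - b.1 ≠ x := by
        intro hc
        apply hb1
        rw [← hc, sub_sub_cancel]
      show h b.1 * ((if y - b.1 = x then (1:ℂ) else 0) * w σ -
          (if y - b.1 = x then (1:ℂ) else 0) *
            w (fun j => σ j - (b.1 j : ZMod (p j)))) = 0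
      rw [if_neg hne]
      ring

end Aux

/-- `c₀ > 0`, and for every `w ⊥ 𝟙⃗` one has
`‖K̂_0(δ_x⊗w⊗𝟙)‖² ≥ c₀‖w‖²`. -/
theorem stmt_8 {d : ℕ} {Ω : Type*} [MeasurableSpace Ω] (μ : Measure Ω)
    [IsProbabilityMeasure μ]
    (τ : (Fin d → ℤ) → Ω → Ω) (hmp : ∀ ξ, MeasurePreserving (τ ξ) μ μ)
    (hτ0 : τ 0 = id) (hτadd : ∀ ξ η, τ (ξ + η) = τ ξ ∘ τ η)
    (p : Fin d → ℕ) [∀ j, NeZero (p j)] (hp2 : ∃ j, 2 ≤ p j)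
    (h : (Fin d → ℤ) → ℂ) (h0 : h 0 = 0)
    (hsum : Summable fun ξ => ‖h ξ‖)
    (hgen : AddSubgroup.closure {ξ : Fin d → ℤ | h ξ ≠ 0} = ⊤) :
    0 < cZero p h ∧
      ∀ (x : Fin d → ℤ) (w : (∀ j, ZMod (p j)) → ℂ),
        (∑ σ : ∀ j, ZMod (p j), w σ) = 0 →
        cZero p h * ∑ σ : ∀ j, ZMod (p j), ‖w σ‖ ^ 2 ≤
          l2normSq μ p (Khat0 p τ h (fun σ y _ => (if y = x then 1 else 0) * w σ)) := by
  classical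
  -- basic summability
  have hq : Summable (fun ξ : Fin d → ℤ => ‖h ξ‖ ^ 2) := by
    refine Summable.of_nonneg_of_le (fun ξ => sq_nonneg _) (fun ξ => ?_)
      (hsum.mul_left (∑' ξ, ‖h ξ‖))
    have h1 : ‖h ξ‖ ≤ ∑' ξ, ‖h ξ‖ :=
      hsum.le_tsum ξ (fun _ _ => norm_nonneg _)
    calc ‖h ξ‖ ^ 2 = ‖h ξ‖ * ‖h ξ‖ := sq _
      _ ≤ (∑' ξ, ‖h ξ‖) * ‖h ξ‖ :=
          mul_le_mul_of_nonneg_right h1 (norm_nonneg _)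
  -- the per-`ℓ` sums
  set F : (∀ j, ZMod (p j)) → (Fin d → ℤ) → ℝ := fun ℓ ξ =>
    ‖h ξ‖ ^ 2 *
      ‖1 - chiC p ℓ (fun j => -((ξ j : ZMod (p j))))‖ ^ 2 with hF
  have hFnonneg : ∀ ℓ ξ, 0 ≤ F ℓ ξ := fun ℓ ξ => by positivity
  have hAle : ∀ (ℓ : ∀ j, ZMod (p j)) (m : ∀ j, ZMod (p j)),
      ‖1 - chiC p ℓ m‖ ^ 2 ≤ 4 := by
    intro ℓ m
    have h1 : ‖1 - chiC p ℓ m‖ ≤ 2 := by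
      calc ‖1 - chiC p ℓ m‖ ≤ ‖(1:ℂ)‖ + ‖chiC p ℓ m‖ := by
            simpa using norm_sub_le (1 : ℂ) (chiC p ℓ m)
        _ = 2 := by rw [chiC_abs]; norm_num
    calc ‖1 - chiC p ℓ m‖ ^ 2 ≤ 2 ^ 2 :=
          pow_le_pow_left₀ (norm_nonneg _) h1 2
      _ = 4 := by norm_num
  have hFsum : ∀ ℓ, Summable (F ℓ) := by
    intro ℓ
    refine Summable.of_nonneg_of_le (hFnonneg ℓ) (fun ξ => ?_) (hq.mul_right 4)
    exact mul_le_mul_of_nonneg_left (hAle ℓ _) (sq_nonneg _)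
  -- `cZero` in terms of `F`
  have hc : cZero p h = ⨅ ℓ : {ℓ : ∀ j, ZMod (p j) // ℓ ≠ 0}, ∑' ξ : Fin d → ℤ, F ℓ.1 ξ := by
    unfold cZero
    congr 1
    funext ℓ
    have hsupp : Function.support (F ℓ.1) ⊆ {ξ : Fin d → ℤ | ξ ≠ 0} := by
      intro ξ hξ
      simp only [Function.mem_support, hF] at hξ
      intro hξ0
      apply hξ
      rw [hξ0, h0]
      simp
    rw [← tsum_subtype_eq_of_support_subset hsupp]
    refine tsum_congr fun ξ => ?_
    rw [hF]
    simp only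
    rw [expFactor]
  -- positivity of each `∑' F ℓ` for `ℓ ≠ 0`
  have hSpos : ∀ ℓ : ∀ j, ZMod (p j), ℓ ≠ 0 → 0 < ∑' ξ : Fin d → ℤ, F ℓ ξ := by
    intro ℓ hℓ
    have hex : ∃ ξ : Fin d → ℤ, 0 < F ℓ ξ := by
      by_contra hcon
      push_neg at hcon
      have hzero : ∀ ξ, F ℓ ξ = 0 := fun ξ => le_antisymm (hcon ξ) (hFnonneg ℓ ξ)
      -- kernel subgroup
      set H : AddSubgroup (Fin d → ℤ) :=
        { carrier := {ξ : Fin d → ℤ | chiC p ℓ (fun j => -((ξ j : ZMod (p j)))) = 1}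
          zero_mem' := by
            have : (fun j => -(((0 : Fin d → ℤ) j : ZMod (p j)))) = (0 : ∀ j, ZMod (p j)) := by
              funext j; simp
            simp only [Set.mem_setOf_eq, this, AddChar.map_zero_eq_one]
          add_mem' := by
            intro a b ha hb
            simp only [Set.mem_setOf_eq] at ha hb ⊢
            have : (fun j => -(((a + b) j : ZMod (p j)))) =
                (fun j => -((a j : ZMod (p j)))) + (fun j => -((b j : ZMod (p j)))) := by
              funext j; simp only [Pi.add_apply]; push_cast; ring
            rw [this, AddChar.map_add_eq_mul, ha, hb, one_mul]
          neg_mem' := by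
            intro a ha
            simp only [Set.mem_setOf_eq] at ha ⊢
            have : (fun j => -(((-a) j : ZMod (p j)))) =
                -(fun j => -((a j : ZMod (p j)))) := by
              funext j; simp only [Pi.neg_apply]; push_cast; ring
            rw [this, AddChar.map_neg_eq_inv, ha, inv_one] } with hH
      have hsub : {ξ : Fin d → ℤ | h ξ ≠ 0} ⊆ (H : Set (Fin d → ℤ)) := by
        intro ξ hξ
        have hz := hzero ξ
        rw [hF] at hz
        simp only at hz
        have habs : ‖h ξ‖ ^ 2 ≠ 0 := by
          simpa using hξ
        have h2 : ‖1 - chiC p ℓ (fun j => -((ξ j : ZMod (p j))))‖ ^ 2 = 0 :=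
          (mul_eq_zero.mp hz).resolve_left habs
        have h3 : (1 : ℂ) - chiC p ℓ (fun j => -((ξ j : ZMod (p j)))) = 0 :=
          norm_eq_zero.mp ((pow_eq_zero_iff two_ne_zero).mp h2)
        show chiC p ℓ (fun j => -((ξ j : ZMod (p j)))) = 1
        exact (sub_eq_zero.mp h3).symm
      have hHtop : H = ⊤ := by
        rw [eq_top_iff, ← hgen]
        exact (AddSubgroup.closure_le H).mpr hsub
      obtain ⟨j, hj⟩ := Function.ne_iff.mp hℓ
      have hmem : (Pi.single j (-1 : ℤ) : Fin d → ℤ) ∈ H := by rw [hHtop]; trivial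
      have h5 : chiC p ℓ (fun i => -(((Pi.single j (-1 : ℤ) : Fin d → ℤ) i : ZMod (p i)))) = 1 :=
        hmem
      have hbar : (fun i => -(((Pi.single j (-1 : ℤ) : Fin d → ℤ) i : ZMod (p i)))) =
          Pi.single j (1 : ZMod (p j)) := by
        funext i
        by_cases hi : i = j
        · subst hi; simp
        · simp [Pi.single_eq_of_ne hi]
      rw [hbar, chiC_single] at h5
      apply hj
      have := ZMod.injective_stdAddChar (N := p j) (a₁ := ℓ j) (a₂ := 0) (by simpa using h5)
      simpa using this
    obtain ⟨ξ0, hξ0⟩ := hex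
    exact Summable.tsum_pos (hFsum ℓ) (hFnonneg ℓ) ξ0 hξ0
  constructor
  · -- positivity of cZero
    obtain ⟨j0, hj0⟩ := hp2
    haveI : Fact (1 < p j0) := ⟨hj0⟩
    have hℓ0 : (Pi.single j0 (1 : ZMod (p j0)) : ∀ j, ZMod (p j)) ≠ 0 := by
      intro hc0
      have := congrFun hc0 j0
      rw [Pi.single_eq_same] at this
      exact one_ne_zero this
    haveI : Nonempty {ℓ : ∀ j, ZMod (p j) // ℓ ≠ 0} := ⟨⟨_, hℓ0⟩⟩
    rw [hc]
    obtain ⟨ℓm, hmin⟩ :=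
      Finite.exists_min (fun ℓ : {ℓ : ∀ j, ZMod (p j) // ℓ ≠ 0} => ∑' ξ : Fin d → ℤ, F ℓ.1 ξ)
    exact lt_of_lt_of_le (hSpos ℓm.1 ℓm.2) (le_ciInf hmin)
  · intro x w hw
    have hN : (0:ℝ) < (Fintype.card (∀ j, ZMod (p j)) : ℝ) := by
      exact_mod_cast Fintype.card_pos
    have hdft0 : dftC p w 0 = 0 := by
      unfold dftC
      have h1 : ∀ σ, chiC p (0 : ∀ j, ZMod (p j)) σ = 1 := fun σ => by
        rw [chiC_apply]
        apply Finset.prod_eq_one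
        intro j _
        simp
      simp only [h1, map_one, mul_one]
      exact hw
    set B := ∑ σ, ‖w σ‖ with hB
    have hwle : ∀ τ', ‖w τ'‖ ≤ B := by
      intro τ'
      rw [hB]
      exact Finset.single_le_sum (f := fun σ => ‖w σ‖)
        (fun σ _ => norm_nonneg _) (Finset.mem_univ τ')
    have hdiff : ∀ σ τ' : ∀ j, ZMod (p j), ‖w σ - w τ'‖ ^ 2 ≤ (2*B)^2 := by
      intro σ τ'
      have h1 : ‖w σ - w τ'‖ ≤ 2 * B := by
        calc ‖w σ - w τ'‖ ≤ ‖w σ‖ + ‖w τ'‖ := by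
              simpa using norm_sub_le (w σ) (w τ')
          _ ≤ 2 * B := by linarith [hwle σ, hwle τ']
      exact pow_le_pow_left₀ (norm_nonneg _) h1 2
    set g : (∀ j, ZMod (p j)) → (Fin d → ℤ) → ℝ := fun σ ξ =>
      ‖h ξ‖ ^ 2 *
        ‖w σ - w (fun j => σ j - (ξ j : ZMod (p j)))‖ ^ 2 with hg
    have hg_sum : ∀ σ, Summable (g σ) := by
      intro σ
      refine Summable.of_nonneg_of_le (fun ξ => by positivity) (fun ξ => ?_)
        (hq.mul_right ((2*B)^2))
      exact mul_le_mul_of_nonneg_left (hdiff σ _) (sq_nonneg _)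
    have E1 : l2normSq μ p (Khat0 p τ h (fun σ y _ => (if y = x then 1 else 0) * w σ)) =
        ∑ σ : ∀ j, ZMod (p j), ∑' y : Fin d → ℤ, g σ (y - x) := by
      unfold l2normSq
      refine Finset.sum_congr rfl fun σ _ => tsum_congr fun y => ?_
      have hK : ∀ ω, Khat0 p τ h (fun σ y _ => (if y = x then 1 else 0) * w σ) σ y ω =
          h (y - x) * (w σ - w (fun j => σ j - ((y - x) j : ZMod (p j)))) :=
        fun ω => Khat_eval p τ h h0 x w σ y ω
      simp only [hK]
      rw [integral_const, probReal_univ, one_smul, hg]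
      simp only
      rw [norm_mul, mul_pow]
    have E2 : ∀ σ, ∑' y : Fin d → ℤ, g σ (y - x) = ∑' ξ : Fin d → ℤ, g σ ξ := fun σ => by
      simpa using (Equiv.subRight x).tsum_eq (g σ)
    have E3 : ∑ σ : ∀ j, ZMod (p j), ∑' ξ : Fin d → ℤ, g σ ξ =
        ∑' ξ : Fin d → ℤ, ∑ σ : ∀ j, ZMod (p j), g σ ξ :=
      (Summable.tsum_finsetSum fun σ _ => hg_sum σ).symm
    have E4 : ∀ ξ : Fin d → ℤ, (Fintype.card (∀ j, ZMod (p j)) : ℝ) * ∑ σ, g σ ξ =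
        ∑ ℓ, ‖dftC p w ℓ‖ ^ 2 * F ℓ ξ := by
      intro ξ
      have hKI : (Fintype.card (∀ j, ZMod (p j)) : ℝ) *
          ∑ σ, ‖w σ - w (fun j => σ j - (ξ j : ZMod (p j)))‖ ^ 2 =
          ∑ ℓ, ‖dftC p w ℓ‖ ^ 2 *
            ‖1 - chiC p ℓ (fun j => -((ξ j : ZMod (p j))))‖ ^ 2 :=
        key_identity p w (fun j => (ξ j : ZMod (p j)))
      calc (Fintype.card (∀ j, ZMod (p j)) : ℝ) * ∑ σ, g σ ξ
          = ‖h ξ‖ ^ 2 * ((Fintype.card (∀ j, ZMod (p j)) : ℝ) *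
              ∑ σ, ‖w σ - w (fun j => σ j - (ξ j : ZMod (p j)))‖ ^ 2) := by
            rw [hg]
            simp only
            rw [← Finset.mul_sum]
            ring
        _ = ‖h ξ‖ ^ 2 * ∑ ℓ, ‖dftC p w ℓ‖ ^ 2 *
              ‖1 - chiC p ℓ (fun j => -((ξ j : ZMod (p j))))‖ ^ 2 := by
            rw [hKI]
        _ = ∑ ℓ, ‖dftC p w ℓ‖ ^ 2 * F ℓ ξ := by
            rw [Finset.mul_sum]
            refine Finset.sum_congr rfl fun ℓ _ => ?_
            rw [hF]
            simp only
            ring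
    have E5 : (Fintype.card (∀ j, ZMod (p j)) : ℝ) * ∑' ξ : Fin d → ℤ, ∑ σ, g σ ξ =
        ∑' ξ : Fin d → ℤ, ∑ ℓ, ‖dftC p w ℓ‖ ^ 2 * F ℓ ξ := by
      rw [← tsum_mul_left]
      exact tsum_congr E4
    have E6 : ∑' ξ : Fin d → ℤ, ∑ ℓ, ‖dftC p w ℓ‖ ^ 2 * F ℓ ξ =
        ∑ ℓ, ‖dftC p w ℓ‖ ^ 2 * ∑' ξ : Fin d → ℤ, F ℓ ξ := by
      rw [Summable.tsum_finsetSum (fun ℓ _ => (hFsum ℓ).mul_left _)]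
      exact Finset.sum_congr rfl fun ℓ _ => tsum_mul_left
    have E7 : ∀ ℓ, cZero p h * ‖dftC p w ℓ‖ ^ 2 ≤
        ‖dftC p w ℓ‖ ^ 2 * ∑' ξ : Fin d → ℤ, F ℓ ξ := by
      intro ℓ
      by_cases hℓ : ℓ = 0
      · subst hℓ
        rw [hdft0]
        simp
      · have hbdd : BddBelow (Set.range
            fun ℓ : {ℓ : ∀ j, ZMod (p j) // ℓ ≠ 0} => ∑' ξ : Fin d → ℤ, F ℓ.1 ξ) := by
          refine ⟨0, ?_⟩
          rintro y ⟨ℓ', rfl⟩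
          exact tsum_nonneg (fun ξ => hFnonneg _ _)
        have h1 : cZero p h ≤ ∑' ξ : Fin d → ℤ, F ℓ ξ := by
          rw [hc]
          exact ciInf_le hbdd ⟨ℓ, hℓ⟩
        rw [mul_comm]
        exact mul_le_mul_of_nonneg_left h1 (sq_nonneg _)
    have E123 : l2normSq μ p (Khat0 p τ h (fun σ y _ => (if y = x then 1 else 0) * w σ)) =
        ∑' ξ : Fin d → ℤ, ∑ σ, g σ ξ := by
      rw [E1, Finset.sum_congr rfl fun σ _ => E2 σ, E3]
    have hfinal : (Fintype.card (∀ j, ZMod (p j)) : ℝ) *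
        (cZero p h * ∑ σ : ∀ j, ZMod (p j), ‖w σ‖ ^ 2) ≤
        (Fintype.card (∀ j, ZMod (p j)) : ℝ) *
          l2normSq μ p (Khat0 p τ h (fun σ y _ => (if y = x then 1 else 0) * w σ)) := by
      calc (Fintype.card (∀ j, ZMod (p j)) : ℝ) *
            (cZero p h * ∑ σ : ∀ j, ZMod (p j), ‖w σ‖ ^ 2)
          = cZero p h * ((Fintype.card (∀ j, ZMod (p j)) : ℝ) *
              ∑ σ : ∀ j, ZMod (p j), ‖w σ‖ ^ 2) := by ring
        _ = cZero p h * ∑ ℓ, ‖dftC p w ℓ‖ ^ 2 := by rw [← parseval_real]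
        _ = ∑ ℓ, cZero p h * ‖dftC p w ℓ‖ ^ 2 := Finset.mul_sum _ _ _
        _ ≤ ∑ ℓ, ‖dftC p w ℓ‖ ^ 2 * ∑' ξ : Fin d → ℤ, F ℓ ξ :=
            Finset.sum_le_sum fun ℓ _ => E7 ℓ
        _ = (Fintype.card (∀ j, ZMod (p j)) : ℝ) *
              l2normSq μ p (Khat0 p τ h (fun σ y _ => (if y = x then 1 else 0) * w σ)) := by
            rw [← E6, ← E5, E123]
    exact le_of_mul_le_mul_left hfinal hN
end

section
/- Let (Ω, μ) be a probability space with a measure-preserving ℤ^d-action (τ_ξ)_{ξ∈ℤ^d}, let h : ℤ^d → ℂ satisfy h(0) = 0 and ∑_ζ |h(ζ)| < ∞, and let v ∈ L^∞(Ω) be real-valued. On L²(M), where M = ℤ^d × ℤ^d × Ω with the product of counting measure, counting measure and μ, define S_ξΨ(x,y,ω) = Ψ(x−ξ, y−ξ, τ_ξω), 𝒦Ψ(x,y,ω) = ∑_{ζ≠0} h(ζ)·[Ψ(x−ζ, y, ω) − Ψ(x, y−ζ, ω)], and 𝒱Ψ(x,y,ω) = (v(τ_xω) − v(τ_yω))·Ψ(x,y,ω).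 Then ξ ↦ S_ξ is a unitary representation of the additive group ℤ^d on L²(M) (each S_ξ is unitary, S_0 = id, and S_ξ ∘ S_η = S_{ξ+η}), and for every ξ ∈ ℤ^d one has S_ξ ∘ 𝒦 = 𝒦 ∘ S_ξ and S_ξ ∘ 𝒱 = 𝒱 ∘ S_ξ. -/
open MeasureTheory
open scoped BigOperators

/-- The simultaneous position/disorder shift `S_ξΨ(x,y,ω) = Ψ(x−ξ, y−ξ, τ_ξω)`. -/
def Sop {d : ℕ} {Ω : Type*} (τ : (Fin d → ℤ) → Ω → Ω) (ξ : Fin d → ℤ)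
    (Ψ : (Fin d → ℤ) → (Fin d → ℤ) → Ω → ℂ) : (Fin d → ℤ) → (Fin d → ℤ) → Ω → ℂ :=
  fun x y ω => Ψ (x - ξ) (y - ξ) (τ ξ ω)

/-- The hopping commutator `𝒦Ψ(x,y,ω) = ∑_{ζ≠0} h(ζ)(Ψ(x−ζ,y,ω) − Ψ(x,y−ζ,ω))`. -/
noncomputable def Kop {d : ℕ} {Ω : Type*} (h : (Fin d → ℤ) → ℂ)
    (Ψ : (Fin d → ℤ) → (Fin d → ℤ) → Ω → ℂ) : (Fin d → ℤ) → (Fin d → ℤ) → Ω → ℂ :=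
  fun x y ω => ∑' ζ : {ζ : Fin d → ℤ // ζ ≠ 0}, h ζ.1 * (Ψ (x - ζ.1) y ω - Ψ x (y - ζ.1) ω)

/-- The potential commutator `𝒱Ψ(x,y,ω) = (v(τ_xω) − v(τ_yω))·Ψ(x,y,ω)`. -/
def Vop {d : ℕ} {Ω : Type*} (τ : (Fin d → ℤ) → Ω → Ω) (v : Ω → ℝ)
    (Ψ : (Fin d → ℤ) → (Fin d → ℤ) → Ω → ℂ) : (Fin d → ℤ) → (Fin d → ℤ) → Ω → ℂ :=
  fun x y ω => ((v (τ x ω) - v (τ y ω) : ℝ) : ℂ) * Ψ x y ω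

/-- `ξ ↦ S_ξ` is a unitary representation of `ℤ^d` on `L²(M)`,
`M = ℤ^d × ℤ^d × Ω`, and it commutes with `𝒦` and `𝒱`. -/
theorem stmt_9 {d : ℕ} {Ω : Type*} [MeasurableSpace Ω] (μ : Measure Ω)
    [IsProbabilityMeasure μ]
    (τ : (Fin d → ℤ) → Ω → Ω) (hmp : ∀ ξ, MeasurePreserving (τ ξ) μ μ)
    (hτ0 : τ 0 = id) (hτadd : ∀ ξ η, τ (ξ + η) = τ ξ ∘ τ η)
    (h : (Fin d → ℤ) → ℂ) (h0 : h 0 = 0)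
    (hsum : Summable fun ξ => ‖h ξ‖)
    (v : Ω → ℝ) (hv : Measurable v) (hvbd : ∃ C : ℝ, ∀ᵐ ω ∂μ, |v ω| ≤ C) :
    -- group representation:
    (∀ Ψ : (Fin d → ℤ) → (Fin d → ℤ) → Ω → ℂ, Sop τ (0 : Fin d → ℤ) Ψ = Ψ) ∧
    (∀ (ξ η : Fin d → ℤ) (Ψ : (Fin d → ℤ) → (Fin d → ℤ) → Ω → ℂ),
      Sop τ ξ (Sop τ η Ψ) = Sop τ (ξ + η) Ψ) ∧
    -- each `S_ξ` preserves the `L²(M)` inner product (unitarity):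
    (∀ (ξ : Fin d → ℤ) (Ψ Φ : (Fin d → ℤ) → (Fin d → ℤ) → Ω → ℂ),
      (∀ x y, AEStronglyMeasurable (Ψ x y) μ) → (∀ x y, AEStronglyMeasurable (Φ x y) μ) →
      (∑' x : Fin d → ℤ, ∑' y : Fin d → ℤ,
          ∫ ω, (starRingEnd ℂ) (Sop τ ξ Ψ x y ω) * Sop τ ξ Φ x y ω ∂μ) =
        ∑' x : Fin d → ℤ, ∑' y : Fin d → ℤ,
          ∫ ω, (starRingEnd ℂ) (Ψ x y ω) * Φ x y ω ∂μ) ∧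
    -- commutation with `𝒦` and `𝒱`:
    (∀ (ξ : Fin d → ℤ) (Ψ : (Fin d → ℤ) → (Fin d → ℤ) → Ω → ℂ),
      Sop τ ξ (Kop h Ψ) = Kop h (Sop τ ξ Ψ)) ∧
    (∀ (ξ : Fin d → ℤ) (Ψ : (Fin d → ℤ) → (Fin d → ℤ) → Ω → ℂ),
      Sop τ ξ (Vop τ v Ψ) = Vop τ v (Sop τ ξ Ψ)) := by
  -- the measurable equivalence given by τ ξ
  have hli : ∀ ξ : Fin d → ℤ, Function.LeftInverse (τ (-ξ)) (τ ξ) := by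
    intro ξ ω
    have := congrFun (hτadd (-ξ) ξ) ω
    simpa [hτ0] using this.symm
  have hri : ∀ ξ : Fin d → ℤ, Function.RightInverse (τ (-ξ)) (τ ξ) := by
    intro ξ ω
    have := congrFun (hτadd ξ (-ξ)) ω
    simpa [hτ0] using this.symm
  let e : (Fin d → ℤ) → Ω ≃ᵐ Ω := fun ξ =>
    { toFun := τ ξ
      invFun := τ (-ξ)
      left_inv := hli ξ
      right_inv := hri ξ
      measurable_toFun := (hmp ξ).measurable
      measurable_invFun := (hmp (-ξ)).measurable }
  have hint : ∀ (ξ : Fin d → ℤ) (g : Ω → ℂ), ∫ ω, g (τ ξ ω) ∂μ = ∫ ω, g ω ∂μ := by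
    intro ξ g
    have h1 : ∫ ω, g (τ ξ ω) ∂μ = ∫ ω, g ((e ξ) ω) ∂μ := rfl
    rw [h1, ← MeasureTheory.integral_map_equiv (e ξ) g]
    congr 1
    exact ((hmp ξ).map_eq)
  refine ⟨?_, ?_, ?_, ?_, ?_⟩
  · intro Ψ
    funext x y ω
    simp [Sop, hτ0]
  · intro ξ η Ψ
    funext x y ω
    simp only [Sop]
    rw [add_comm ξ η, hτadd]
    simp [sub_sub, add_comm η ξ]
  · intro ξ Ψ Φ _ _
    have key : ∀ x y : Fin d → ℤ,
        (∫ ω, (starRingEnd ℂ) (Sop τ ξ Ψ x y ω) * Sop τ ξ Φ x y ω ∂μ) =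
        ∫ ω, (starRingEnd ℂ) (Ψ (x - ξ) (y - ξ) ω) * Φ (x - ξ) (y - ξ) ω ∂μ := by
      intro x y
      exact hint ξ (fun ω => (starRingEnd ℂ) (Ψ (x - ξ) (y - ξ) ω) * Φ (x - ξ) (y - ξ) ω)
    calc (∑' x : Fin d → ℤ, ∑' y : Fin d → ℤ,
          ∫ ω, (starRingEnd ℂ) (Sop τ ξ Ψ x y ω) * Sop τ ξ Φ x y ω ∂μ)
        = ∑' x : Fin d → ℤ, ∑' y : Fin d → ℤ,
          ∫ ω, (starRingEnd ℂ) (Ψ (x - ξ) (y - ξ) ω) * Φ (x - ξ) (y - ξ) ω ∂μ := by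
          exact tsum_congr fun x => tsum_congr fun y => key x y
      _ = ∑' x : Fin d → ℤ, ∑' y : Fin d → ℤ,
          ∫ ω, (starRingEnd ℂ) (Ψ x y ω) * Φ x y ω ∂μ := by
          rw [← (Equiv.subRight ξ).tsum_eq (fun x => ∑' y : Fin d → ℤ,
            ∫ ω, (starRingEnd ℂ) (Ψ x y ω) * Φ x y ω ∂μ)]
          refine tsum_congr fun x => ?_
          exact (Equiv.subRight ξ).tsum_eq (fun y =>
            ∫ ω, (starRingEnd ℂ) (Ψ (x - ξ) y ω) * Φ (x - ξ) y ω ∂μ)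
  · intro ξ Ψ
    funext x y ω
    simp only [Sop, Kop]
    refine tsum_congr fun ζ => ?_
    rw [sub_right_comm x ξ ζ.1, sub_right_comm y ξ ζ.1]
  · intro ξ Ψ
    funext x y ω
    simp only [Sop, Vop]
    have hx : τ (x - ξ) (τ ξ ω) = τ x ω := by
      have := congrFun (hτadd (x - ξ) ξ) ω
      simpa [sub_add_cancel] using this.symm
    have hy : τ (y - ξ) (τ ξ ω) = τ y ω := by
      have := congrFun (hτadd (y - ξ) ξ) ω
      simpa [sub_add_cancel] using this.symm
    rw [hx, hy]
end
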